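/- Let d ≥ 2. For every path γ of ℤ^d and every N ∈ ℕ*, the set Γ of macroscopic sites i such that the N-box B_N(i) is visited by γ satisfies |Γ| ≤ 3^d (1 + (|γ| + 1)/N), where |γ| denotes the number of edges of γ. -/

import Mathlib

open MeasureTheory Filter Topology
open scoped ENNReal

namespace Perco

/-- Vertices of the hypercubic lattice `ℤ^d`. -/
abbrev V (d : ℕ) := Fin d → ℤ

/-- The `ℓ¹` distance on `ℤ^d`. -/
def dist1 {d : ℕ} (x y : V d) : ℕ := ∑ i, (x i - y i).natAbs

/-- The `ℓ¹` norm, as a real number. -/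
def norm1 {d : ℕ} (x : V d) : ℝ := (dist1 x 0 : ℝ)

/-- The `ℓ¹` distance, descended to unordered pairs. -/
def sym2dist1 {d : ℕ} : Sym2 (V d) → ℕ :=
  Sym2.lift ⟨fun x y => dist1 x y, fun x y => by
    unfold dist1
    exact Finset.sum_congr rfl fun i _ => by rw [← Int.natAbs_neg, neg_sub]⟩

/-- Edges of the lattice `(ℤ^d, 𝔼^d)`: unordered pairs of nearest neighbours. -/
def Edge (d : ℕ) : Type := {e : Sym2 (V d) // sym2dist1 e = 1}

/-- A bond percolation configuration: every edge is open (`true`) or closed (`false`). -/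
abbrev Config (d : ℕ) := Edge d → Bool

/-- The unordered pair `e` is an open edge of the configuration `ω`. -/
def openE {d : ℕ} (ω : Config d) (e : Sym2 (V d)) : Prop :=
  ∃ h : sym2dist1 e = 1, ω ⟨e, h⟩ = true

/-- `⟨x, y⟩` is an open edge of the configuration `ω`. -/
def edgeOpen {d : ℕ} (ω : Config d) (x y : V d) : Prop := openE ω s(x, y)

/-- `f 0, f 1, …, f n` is an `ω`-open path (with `n` edges). -/
def IsOpenPath {d : ℕ} (ω : Config d) (n : ℕ) (f : ℕ → V d) : Prop :=
  ∀ i < n, edgeOpen ω (f i) (f (i + 1))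

/-- `f 0, …, f n` is a (not necessarily open) lattice path of `ℤ^d`. -/
def IsLatticePath {d : ℕ} (n : ℕ) (f : ℕ → V d) : Prop :=
  ∀ i < n, dist1 (f i) (f (i + 1)) = 1

/-- The chemical distance between `x` and `y` in the configuration `ω`:
the minimal number of edges of an `ω`-open path from `x` to `y` (`⊤` if there is none). -/
noncomputable def chemDist {d : ℕ} (ω : Config d) (x y : V d) : ℝ≥0∞ :=
  sInf {r : ℝ≥0∞ | ∃ (n : ℕ) (f : ℕ → V d),
    IsOpenPath ω n f ∧ f 0 = x ∧ f n = y ∧ r = (n : ℝ≥0∞)}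

/-- `x` and `y` are connected by an `ω`-open path. -/
def Connected {d : ℕ} (ω : Config d) (x y : V d) : Prop := chemDist ω x y ≠ ⊤

/-- The open cluster of the vertex `x`. -/
def cluster {d : ℕ} (ω : Config d) (x : V d) : Set (V d) := {y | Connected ω x y}

/-- `x` lies in an infinite open cluster. -/
def InInfiniteCluster {d : ℕ} (ω : Config d) (x : V d) : Prop := (cluster ω x).Infinite

open Classical in
/-- The regularized point `x̃`: a point of the infinite cluster minimizing the `ℓ¹`
distance to `x` (with a deterministic rule to break ties); `x` itself if there is none. -/
noncomputable def regPoint {d : ℕ} (ω : Config d) (x : V d) : V d :=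
  if h : ∃ y : V d, InInfiniteCluster ω y ∧
      ∀ z : V d, InInfiniteCluster ω z → dist1 x y ≤ dist1 x z
  then h.choose else x

/-- Real-valued chemical distance (in the configuration `ωdist`) between the
regularizations (w.r.t. the configuration `ωreg`) of `x` and `y`. -/
noncomputable def DReg {d : ℕ} (ωdist ωreg : Config d) (x y : V d) : ℝ :=
  (chemDist ωdist (regPoint ωreg x) (regPoint ωreg y)).toReal

open Classical in
/-- The number of elements of a set, as an element of `ℝ≥0∞` (`⊤` for infinite sets). -/
noncomputable def eSize {α : Type*} (A : Set α) : ℝ≥0∞ :=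
  if h : A.Finite then (h.toFinset.card : ℝ≥0∞) else ⊤

/-!  ### Boxes and renormalization  -/

/-- The box of "radius" `R` centered at `c`: `∏ₖ [c k - R, c k + R)`. -/
def boxC {d : ℕ} (c : V d) (R : ℕ) : Set (V d) :=
  {x | ∀ k, c k - (R : ℤ) ≤ x k ∧ x k < c k + (R : ℤ)}

/-- The center `i(2N+1)` of the `N`-box of macroscopic index `i`. -/
def center {d : ℕ} (N : ℕ) (i : V d) : V d := fun k => i k * (2 * (N : ℤ) + 1)

/-- The `N`-box `B_N(i) = i(2N+1) + [-N, N)^d`. -/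
def macroBox {d : ℕ} (N : ℕ) (i : V d) : Set (V d) := boxC (center N i) N

/-- The enlarged box `B'_N(i) = i(2N+1) + [-3N, 3N)^d`. -/
def macroBox' {d : ℕ} (N : ℕ) (i : V d) : Set (V d) := boxC (center N i) (3 * N)

/-- An open path all of whose vertices stay in the set `S`. -/
def IsOpenPathIn {d : ℕ} (ω : Config d) (S : Set (V d)) (n : ℕ) (f : ℕ → V d) : Prop :=
  IsOpenPath ω n f ∧ ∀ i ≤ n, f i ∈ S

/-- `x` and `y` are connected by an open path inside `S`. -/
def ConnectedIn {d : ℕ} (ω : Config d) (S : Set (V d)) (x y : V d) : Prop :=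
  ∃ (n : ℕ) (f : ℕ → V d), IsOpenPathIn ω S n f ∧ f 0 = x ∧ f n = y

/-- The open cluster of `x` inside the set `S`. -/
def clusterIn {d : ℕ} (ω : Config d) (S : Set (V d)) (x : V d) : Set (V d) :=
  {y | ConnectedIn ω S x y}

/-- `C` is an open cluster of the region `S`. -/
def IsClusterIn {d : ℕ} (ω : Config d) (S : Set (V d)) (C : Set (V d)) : Prop :=
  ∃ x ∈ S, C = clusterIn ω S x

/-- The cluster `C` has diameter at least `m`. -/
def diamGE {d : ℕ} (C : Set (V d)) (m : ℕ) : Prop :=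
  ∃ x ∈ C, ∃ y ∈ C, ∃ k, (m : ℤ) ≤ |x k - y k|

/-- The cluster `C` is crossing for the box `boxC c R`: for each of the `d` directions,
`C ∩ boxC c R` contains an open path connecting the two opposite faces of the box. -/
def CrossingFor {d : ℕ} (ω : Config d) (C : Set (V d)) (c : V d) (R : ℕ) : Prop :=
  ∀ k : Fin d, ∃ (n : ℕ) (f : ℕ → V d), IsOpenPath ω n f ∧
    (∀ m ≤ n, f m ∈ C ∩ boxC c R) ∧ f 0 k = c k - (R : ℤ) ∧ f n k = c k + (R : ℤ) - 1

/-- The `N`-box `B_N(i)` is good (for the configuration `ω`, with parameter `β`):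
(i) there is a unique open cluster `C` of `B'_N(i)` of diameter at least `N`;
(ii) `C` is crossing for each of the `3^d` `N`-boxes included in `B'_N(i)`;
(iii) any two points of `C ∩ B'_N(i)` are at chemical distance at most `12βN`. -/
def IsGoodBox {d : ℕ} (ω : Config d) (N : ℕ) (β : ℝ) (i : V d) : Prop :=
  ∃ C : Set (V d),
    IsClusterIn ω (macroBox' N i) C ∧ diamGE C N ∧
    (∀ C', IsClusterIn ω (macroBox' N i) C' → diamGE C' N → C' = C) ∧
    (∀ j : V d, (∀ k, |j k - i k| ≤ 1) → CrossingFor ω C (center N j) N) ∧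
    (∀ x ∈ macroBox' N i, ∀ y ∈ macroBox' N i, x ∈ C → y ∈ C →
      chemDist ω x y ≤ ENNReal.ofReal (12 * β * N))

/-- `x` belongs to the crossing cluster of the good box `B_N(j)`, i.e. to a cluster of
`B'_N(j)` of diameter at least `N`. -/
def InCrossingCluster {d : ℕ} (ω : Config d) (N : ℕ) (j : V d) (x : V d) : Prop :=
  ∃ C : Set (V d), IsClusterIn ω (macroBox' N j) C ∧ diamGE C N ∧ x ∈ C

/-!  ### Macroscopic site percolation -/

/-- A nearest-neighbour path of macroscopic sites staying in `S`. -/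
def IsSitePathIn {d : ℕ} (S : Set (V d)) (n : ℕ) (f : ℕ → V d) : Prop :=
  (∀ m ≤ n, f m ∈ S) ∧ ∀ m < n, dist1 (f m) (f (m + 1)) = 1

/-- The sites `i` and `j` are connected by a nearest-neighbour path inside `S`. -/
def SiteConnectedIn {d : ℕ} (S : Set (V d)) (i j : V d) : Prop :=
  ∃ (n : ℕ) (f : ℕ → V d), IsSitePathIn S n f ∧ f 0 = i ∧ f n = j

/-- A `*`-path of macroscopic sites staying in `S` (consecutive sites are `*`-neighbours:
their `ℓ^∞` distance is `1`). -/
def IsStarPathIn {d : ℕ} (S : Set (V d)) (n : ℕ) (f : ℕ → V d) : Prop :=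
  (∀ m ≤ n, f m ∈ S) ∧ ∀ m < n, f m ≠ f (m + 1) ∧ ∀ k, |f (m + 1) k - f m k| ≤ 1

/-- The set of good macroscopic sites. -/
def goodSites {d : ℕ} (ω : Config d) (N : ℕ) (β : ℝ) : Set (V d) :=
  {i | IsGoodBox ω N β i}

/-- The macroscopic site `i` belongs to an infinite cluster of good boxes. -/
def InInfiniteGoodCluster {d : ℕ} (ω : Config d) (N : ℕ) (β : ℝ) (i : V d) : Prop :=
  IsGoodBox ω N β i ∧ {j | SiteConnectedIn (goodSites ω N β) i j}.Infinite

/-- The union of the bad connected components (of the macroscopic site percolation)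
meeting the set `Γ`; its size is `Σ_{C ∈ Bad, C ∩ Γ ≠ ∅} |C|`. -/
def badTouching {d : ℕ} (ω : Config d) (N : ℕ) (β : ℝ) (Γ : Set (V d)) : Set (V d) :=
  {j | ∃ i ∈ Γ, i ∉ goodSites ω N β ∧ SiteConnectedIn {k | k ∉ goodSites ω N β} i j}

/-!  ### Edges and sites of a path -/

/-- The set of edges of the path `f 0, …, f n`. -/
def pathEdges {d : ℕ} (n : ℕ) (f : ℕ → V d) : Set (Sym2 (V d)) :=
  {e | ∃ i < n, e = s(f i, f (i + 1))}

/-- The set of vertices of the path `f 0, …, f n`. -/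
def pathVerts {d : ℕ} (n : ℕ) (f : ℕ → V d) : Set (V d) :=
  {v | ∃ i ≤ n, f i = v}

/-- The set of `ω`-closed edges of the path `f 0, …, f n`. -/
def closedEdges {d : ℕ} (ω : Config d) (n : ℕ) (f : ℕ → V d) : Set (Sym2 (V d)) :=
  {e | e ∈ pathEdges n f ∧ ¬ openE ω e}

/-- The set `Γ` of macroscopic sites whose `N`-box is visited by the path `f 0, …, f n`. -/
def visitedSites {d : ℕ} (N : ℕ) (n : ℕ) (f : ℕ → V d) : Set (V d) :=
  {i | ∃ m ≤ n, f m ∈ macroBox N i}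

/-!  ### Probability: i.i.d. Bernoulli bond percolation -/

/-- A family of i.i.d. Bernoulli bond percolation measures on the configurations:
`P p` is a probability measure under which the states of the edges are independent
Bernoulli variables of parameter `p`. -/
structure BernoulliFamily (d : ℕ) where
  P : ℝ → Measure (Config d)
  prob : ∀ p, IsProbabilityMeasure (P p)
  iid : ∀ p, 0 ≤ p → p ≤ 1 → ∀ (s : Finset (Edge d)) (f : Edge d → Bool),
    P p {ω : Config d | ∀ e ∈ s, ω e = f e}
      = ∏ e ∈ s, ENNReal.ofReal (if f e then p else 1 - p)

/-- The critical parameter `p_c(d)` of the family. -/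
noncomputable def pc {d : ℕ} (F : BernoulliFamily d) : ℝ :=
  sInf {p : ℝ | 0 ≤ p ∧ p ≤ 1 ∧ 0 < F.P p {ω : Config d | InInfiniteCluster ω 0}}

/-- `t` is the time constant of the percolation measure `P`: for every `x ∈ ℤ^d`,
`D^{𝒞}(0̃, ñx)/n → t x` almost surely. -/
def ASTimeConstant {d : ℕ} (P : Measure (Config d)) (t : V d → ℝ) : Prop :=
  ∀ x : V d, ∀ᵐ ω ∂P, Tendsto (fun n : ℕ => DReg ω ω 0 (n • x) / n) atTop (𝓝 (t x))

/-!  ### Couplings -/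

/-- Two-stage coupling configurations: each edge carries a pair `(V, Z)` of Booleans. -/
abbrev CConfig (d : ℕ) := Edge d → Bool × Bool

/-- The `q`-configuration of a coupled configuration: `e` is `q`-open iff `V e = 1`. -/
def cfgQ {d : ℕ} (u : CConfig d) : Config d := fun e => (u e).1

/-- The `p`-configuration of a coupled configuration: `e` is `p`-open iff `V e Z e = 1`. -/
def cfgP {d : ℕ} (u : CConfig d) : Config d := fun e => (u e).1 && (u e).2

/-- Two-stage coupling of the `p`- and `q`-percolations: on each edge, independently,
`V` is Bernoulli of parameter `q` and `Z` is an independent Bernoulli of parameter `p/q`. -/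
structure CouplingMeasure (d : ℕ) (p q : ℝ) where
  Q : Measure (CConfig d)
  prob : IsProbabilityMeasure Q
  iid : ∀ (s : Finset (Edge d)) (f : Edge d → Bool × Bool),
    Q {u : CConfig d | ∀ e ∈ s, u e = f e}
      = ∏ e ∈ s,
          (ENNReal.ofReal (if (f e).1 then q else 1 - q) *
            ENNReal.ofReal (if (f e).2 then p / q else 1 - p / q))

/-- Standard coupling: i.i.d. uniform variables on `[0,1]`, one for each edge. -/
structure UniformCoupling (d : ℕ) where
  Q : Measure (Edge d → ℝ)
  prob : IsProbabilityMeasure Q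
  iid : ∀ (s : Finset (Edge d)) (a : Edge d → ℝ), (∀ e ∈ s, 0 ≤ a e ∧ a e ≤ 1) →
    Q {u | ∀ e ∈ s, u e ≤ a e} = ∏ e ∈ s, ENNReal.ofReal (a e)

open Classical in
/-- The `p`-configuration of the standard coupling: `e` is `p`-open iff `U e ≤ p`. -/
noncomputable def cfgAt {d : ℕ} (u : Edge d → ℝ) (p : ℝ) : Config d :=
  fun e => if u e ≤ p then true else false

/-- The critical parameter `p_c(d)` read on the standard coupling. -/
noncomputable def pcU {d : ℕ} (U : UniformCoupling d) : ℝ :=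
  sInf {p : ℝ | 0 ≤ p ∧ p ≤ 1 ∧ 0 < U.Q {u | InInfiniteCluster (cfgAt u p) 0}}

open Classical in
/-- A deterministically chosen geodesic (open path of minimal length) from `x` to `y`
in the configuration `ω` (a trivial constant path if there is none). -/
noncomputable def geod {d : ℕ} (ω : Config d) (x y : V d) : ℕ × (ℕ → V d) :=
  if h : ∃ nf : ℕ × (ℕ → V d), IsOpenPath ω nf.1 nf.2 ∧ nf.2 0 = x ∧ nf.2 nf.1 = y ∧
      (nf.1 : ℝ≥0∞) = chemDist ω x y
  then h.choose else (0, fun _ => x)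

/-!  ### Norms on `ℝ^d` -/

/-- `f` is a norm on the Euclidean space `ℝ^d`. -/
def IsNorm {d : ℕ} (f : EuclideanSpace ℝ (Fin d) → ℝ) : Prop :=
  (∀ x, 0 ≤ f x) ∧ (∀ x, f x = 0 ↔ x = 0) ∧
  (∀ (c : ℝ) (x), f (c • x) = |c| * f x) ∧ ∀ x y, f (x + y) ≤ f x + f y

/-- The canonical embedding of `ℤ^d` into the Euclidean space `ℝ^d`. -/
noncomputable def toEuc {d : ℕ} (x : V d) : EuclideanSpace ℝ (Fin d) :=
  (WithLp.equiv 2 (Fin d → ℝ)).symm fun i => (x i : ℝ)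

/-- Property (1) of the path-modification lemma: the edges of `γ' \ γ` decompose as a
disjoint union of self-avoiding `p`-open paths intersecting `γ' ∩ γ` at their endpoints. -/
def DisjointPathDecomposition {d : ℕ} (ωp : Config d) (n : ℕ) (f : ℕ → V d)
    (n' : ℕ) (g : ℕ → V d) : Prop :=
  ∃ (K : ℕ) (m : ℕ → ℕ) (h : ℕ → ℕ → V d),
    (⋃ j ∈ Finset.range K, pathEdges (m j) (h j)) = pathEdges n' g \ pathEdges n f ∧
    (∀ j < K, IsOpenPath ωp (m j) (h j)) ∧
    (∀ j < K, ∀ a ≤ m j, ∀ b ≤ m j, h j a = h j b → a = b) ∧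
    (∀ j < K, ∀ l < K, j ≠ l → Disjoint (pathEdges (m j) (h j)) (pathEdges (m l) (h l))) ∧
    (∀ j < K, h j 0 ∈ pathVerts n f ∧ h j (m j) ∈ pathVerts n f) ∧
    (∀ j < K, ∀ a, 0 < a → a < m j → h j a ∉ pathVerts n f)

/-- The conclusion of the path-modification lemma, for the constant `ρ`:
any `q`-open path between well-connected points of `𝒞_p` can be turned into a `p`-open
path, the total length of the bypasses being controlled by the bad clusters met and the
number of `p`-closed edges. -/
def BypassProperty (d : ℕ) (ρ : ℕ) : Prop :=
  ∀ (N : ℕ), 1 ≤ N → ∀ (β : ℝ), 1 ≤ β → ∀ (ωp ωq : Config d),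
    (∀ e, ωp e = true → ωq e = true) →
    ∀ y z : V d, InInfiniteCluster ωp y → InInfiniteCluster ωp z →
    (∃ i, y ∈ macroBox N i ∧ InInfiniteGoodCluster ωp N β i) →
    (∃ i, z ∈ macroBox N i ∧ InInfiniteGoodCluster ωp N β i) →
    ∀ (n : ℕ) (f : ℕ → V d), IsOpenPath ωq n f → f 0 = y → f n = z →
    ∃ (n' : ℕ) (g : ℕ → V d), IsOpenPath ωp n' g ∧ g 0 = y ∧ g n' = z ∧
      DisjointPathDecomposition ωp n f n' g ∧
      eSize (pathEdges n' g \ pathEdges n f) ≤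
        ((ρ * N : ℕ) : ℝ≥0∞) *
          (eSize (badTouching ωp N β (visitedSites N n f)) + eSize (closedEdges ωp n f))

/-! A path of `n` edges moves at most `n` in each coordinate, so during any `N` consecutive steps
it stays within distance `N` of its position at the start of the stretch, and the `N`-boxes it
meets are then among the `3^d` boxes around the box index of that position. Cutting the path into
`⌊n/N⌋ + 1` stretches gives `|Γ| ≤ (⌊n/N⌋ + 1) 3^d`. -/

/-- `siteOf N x = i` iff `(2N+1) i k - N ≤ x k ≤ (2N+1) i k + N` for all `k`: it extends the
index of the box `macroBox N i` containing `x` to all of `ℤ^d`. -/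
def siteOf {d : ℕ} (N : ℕ) (x : V d) : V d := fun k => (x k + N) / (2 * (N : ℤ) + 1)

lemma abs_sub_le_dist1 {d : ℕ} (x y : V d) (k : Fin d) : |x k - y k| ≤ (dist1 x y : ℤ) := by
  rw [Int.abs_eq_natAbs]
  exact_mod_cast Finset.single_le_sum (f := fun i => (x i - y i).natAbs)
    (fun _ _ => Nat.zero_le _) (Finset.mem_univ k)

lemma IsLatticePath.abs_sub_apply_le {d n : ℕ} {f : ℕ → V d} (hf : IsLatticePath n f)
    (k : Fin d) {a b : ℕ} (hab : a ≤ b) (hbn : b ≤ n) : |f a k - f b k| ≤ (b : ℤ) - a := by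
  induction b, hab using Nat.le_induction with
  | base => simp
  | succ b _ ih =>
    have hstep := abs_sub_le_dist1 (f b) (f (b + 1)) k
    rw [hf b (by omega)] at hstep
    calc |f a k - f (b + 1) k| ≤ |f a k - f b k| + |f b k - f (b + 1) k| := abs_sub_le _ _ _
      _ ≤ ((b : ℤ) - a) + 1 := add_le_add (ih (by omega)) (by exact_mod_cast hstep)
      _ = ((b + 1 : ℕ) : ℤ) - a := by push_cast; ring

lemma sub_siteOf_mem_Icc {d N : ℕ} {i x y : V d} (hx : x ∈ macroBox N i)
    (hxy : ∀ k, |x k - y k| ≤ N) : i - siteOf N y ∈ Finset.Icc (-1) 1 := by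
  have hc : (0 : ℤ) < 2 * N + 1 := by positivity
  have hbounds : ∀ k, (i k - 1) * (2 * N + 1) ≤ y k + N ∧ y k + N < (i k + 2) * (2 * N + 1) :=
    fun k => by
      have hxk := hx k
      have hxyk := abs_le.mp (hxy k)
      simp only [center] at hxk
      constructor <;> linarith
  refine Finset.mem_Icc.mpr ⟨fun k => ?_, fun k => ?_⟩ <;>
    simp only [Pi.sub_apply, Pi.neg_apply, Pi.one_apply, siteOf]
  · have := (Int.ediv_lt_iff_lt_mul hc).mpr (hbounds k).2
    linarith
  · have := (Int.le_ediv_iff_mul_le hc).mpr (hbounds k).1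
    linarith

lemma visitedSites_subset_image {d N n : ℕ} (hN : 1 ≤ N) {f : ℕ → V d}
    (hf : IsLatticePath n f) :
    visitedSites N n f ⊆ ((Finset.range (n / N + 1) ×ˢ Finset.Icc (-1 : V d) 1).image
      fun p => siteOf N (f (N * p.1)) + p.2 : Finset (V d)) := by
  rintro i ⟨m, hmn, hm⟩
  have hstart : N * (m / N) ≤ m := Nat.mul_div_le m N
  have hlen : m - N * (m / N) ≤ N := by
    have := Nat.mod_add_div m N
    have := Nat.mod_lt m (show 0 < N by omega)
    omega
  have hnear : ∀ k, |f m k - f (N * (m / N)) k| ≤ N := fun k => by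
    rw [abs_sub_comm]
    have := hf.abs_sub_apply_le k hstart hmn
    omega
  simp only [Finset.coe_image, Set.mem_image, Finset.mem_coe, Finset.mem_product,
    Finset.mem_range, Prod.exists]
  exact ⟨m / N, _,
    ⟨Nat.lt_succ_of_le (Nat.div_le_div_right hmn), sub_siteOf_mem_Icc hm hnear⟩,
    add_sub_cancel _ _⟩

lemma card_range_product_Icc (d m : ℕ) :
    (Finset.range m ×ˢ Finset.Icc (-1 : V d) 1).card = m * 3 ^ d := by
  simp [Finset.card_product, Pi.card_Icc, Int.card_Icc]

lemma natCast_div_add_one_le {n N : ℕ} (hN : 1 ≤ N) :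
    ((n / N + 1 : ℕ) : ℝ) ≤ 1 + ((n : ℝ) + 1) / N := by
  have hN' : (0 : ℝ) < N := by exact_mod_cast hN
  calc ((n / N + 1 : ℕ) : ℝ) = (n / N : ℕ) + 1 := by push_cast; ring
    _ ≤ (n : ℝ) / N + 1 := by gcongr; exact Nat.cast_div_le
    _ ≤ 1 + ((n : ℝ) + 1) / N := by rw [add_comm]; gcongr; linarith

theorem statement_7_general (d : ℕ) (N : ℕ) (hN : 1 ≤ N)
    (n : ℕ) (f : ℕ → V d) (hf : IsLatticePath n f) :
    (visitedSites N n f).Finite ∧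
      ((visitedSites N n f).ncard : ℝ) ≤ 3 ^ d * (1 + ((n : ℝ) + 1) / N) := by
  have hcover := visitedSites_subset_image hN hf
  refine ⟨Finset.finite_toSet _ |>.subset hcover, ?_⟩
  have hcard : (visitedSites N n f).ncard ≤ (n / N + 1) * 3 ^ d := by
    calc (visitedSites N n f).ncard ≤ (_ : Finset (V d)).card :=
          Set.ncard_coe_finset _ ▸ Set.ncard_le_ncard hcover (Finset.finite_toSet _)
      _ ≤ _ := Finset.card_image_le
      _ = (n / N + 1) * 3 ^ d := card_range_product_Icc d _
  calc ((visitedSites N n f).ncard : ℝ) ≤ ((n / N + 1 : ℕ) : ℝ) * 3 ^ d := by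
        exact_mod_cast hcard
    _ ≤ (1 + ((n : ℝ) + 1) / N) * 3 ^ d := by gcongr; exact natCast_div_add_one_le hN
    _ = 3 ^ d * (1 + ((n : ℝ) + 1) / N) := mul_comm _ _

/-- **Size of the lattice animal of a path.**
For every lattice path `γ` of `ℤ^d` and every `N ≥ 1`, the set `Γ` of macroscopic sites
whose `N`-box is visited by `γ` satisfies `|Γ| ≤ 3^d (1 + (|γ| + 1)/N)`. -/
theorem statement_7 (d : ℕ) (hd : 2 ≤ d) (N : ℕ) (hN : 1 ≤ N)
    (n : ℕ) (f : ℕ → V d) (hf : IsLatticePath n f) :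
    (visitedSites N n f).Finite ∧
      ((visitedSites N n f).ncard : ℝ) ≤ 3 ^ d * (1 + ((n : ℝ) + 1) / N) :=
  statement_7_general d N hN n f hf

end Perco
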